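/- arXiv:2410.04750 — 3 statements merged into one kernel-verified Lean document; each statement's English description precedes it below -/
import Mathlib

section
/- Fix r₊ > 0, Λ < 0, and for M ∈ ℝ set e² := -r₊²(1 - 2M/r₊ + (-Λ/3)r₊²), and Ω_M²(r) := 1 - 2M/r + e²/r² + (-Λ/3)r². Define M_{e=0} := (r₊/2)(1 + (-Λ/3)r₊²) and M₀ := r₊(1 + 2(-Λ/3)r₊²). If M_{e=0} ≤ M < M₀, then e² ≥ 0, r₊ is a root of Ω_M², the derivative dΩ_M²/dr at r₊ equals (2/r₊²)(M₀ - M) > 0, and r₊ is the largest real root of the quartic polynomial (-Λ/3)r⁴ + r² - 2Mr + e² (i.e. the parameters are sub-extremal). -/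
open Set

/-- Sub-extremality of RN–AdS in the parameters (M, r₊, Λ): for
`M_{e=0} ≤ M < M₀`, the charge squared is nonnegative, `r₊` is a root of the lapse
`Ω_M²`, the horizon temperature `(dΩ_M²/dr)(r₊) = (2/r₊²)(M₀ - M)` is positive, and
`r₊` is the largest real root of the quartic `(-Λ/3)r⁴ + r² - 2Mr + e²`. -/
theorem subextremal_parameters (rp Λ M : ℝ) (hrp : 0 < rp) (hΛ : Λ < 0)
    (e2 : ℝ) (he2 : e2 = -rp ^ 2 * (1 - 2 * M / rp + (-Λ / 3) * rp ^ 2))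
    (Me0 M0 : ℝ) (hMe0 : Me0 = rp / 2 * (1 + (-Λ / 3) * rp ^ 2))
    (hM0 : M0 = rp * (1 + 2 * (-Λ / 3) * rp ^ 2))
    (hM1 : Me0 ≤ M) (hM2 : M < M0) :
    0 ≤ e2 ∧
    (1 - 2 * M / rp + e2 / rp ^ 2 + (-Λ / 3) * rp ^ 2 = 0) ∧
    deriv (fun r : ℝ => 1 - 2 * M / r + e2 / r ^ 2 + (-Λ / 3) * r ^ 2) rp
      = 2 / rp ^ 2 * (M0 - M) ∧
    0 < 2 / rp ^ 2 * (M0 - M) ∧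
    (∀ x : ℝ, (-Λ / 3) * x ^ 4 + x ^ 2 - 2 * M * x + e2 = 0 → x ≤ rp) := by
  have hrp' : rp ≠ 0 := hrp.ne'
  have ha : 0 < -Λ / 3 := by linarith
  set a := -Λ / 3 with ha'
  have he2' : e2 = -(a * rp ^ 4 + rp ^ 2 - 2 * M * rp) := by
    rw [he2]; field_simp; ring
  refine ⟨?_, ?_, ?_, ?_, ?_⟩
  · have hMe : rp / 2 * (1 + a * rp ^ 2) ≤ M := hMe0 ▸ hM1
    rw [he2']
    nlinarith [hrp, mul_pos ha (pow_pos hrp 2)]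
  · rw [he2']; field_simp; ring
  · have hd : HasDerivAt (fun r : ℝ => 1 - 2 * M / r + e2 / r ^ 2 + a * r ^ 2)
        (2 * M / rp ^ 2 - 2 * e2 / rp ^ 3 + 2 * a * rp) rp := by
      have h1 : HasDerivAt (fun r : ℝ => 2 * M / r) (2 * M * (-(rp ^ 2)⁻¹)) rp := by
        simpa [div_eq_mul_inv] using (hasDerivAt_inv hrp').const_mul (2 * M)
      have hpow : HasDerivAt (fun r : ℝ => r ^ 2) (2 * rp) rp := by
        simpa using hasDerivAt_pow 2 rp
      have h2 : HasDerivAt (fun r : ℝ => e2 / r ^ 2)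
          (e2 * (-(2 * rp) / (rp ^ 2) ^ 2)) rp := by
        simpa [div_eq_mul_inv] using (hpow.inv (pow_ne_zero 2 hrp')).const_mul e2
      have h3 : HasDerivAt (fun r : ℝ => a * r ^ 2) (a * (2 * rp)) rp :=
        hpow.const_mul a
      have : HasDerivAt (fun r : ℝ => 1 - 2 * M / r + e2 / r ^ 2 + a * r ^ 2)
          (0 - 2 * M * -(rp ^ 2)⁻¹ + e2 * (-(2 * rp) / (rp ^ 2) ^ 2) + a * (2 * rp)) rp :=
        (((hasDerivAt_const rp (1:ℝ)).sub h1).add h2).add h3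
      convert this using 1
      field_simp; ring
    rw [hd.deriv, he2', hM0]
    field_simp; ring
  · have : 0 < 2 / rp ^ 2 := by positivity
    nlinarith [this]
  · intro x hx
    by_contra hxle
    push_neg at hxle
    have hfac : (x - rp) * (a * (x ^ 3 + x ^ 2 * rp + x * rp ^ 2 + rp ^ 3)
        + (x + rp) - 2 * M) = 0 := by
      rw [he2'] at hx; nlinarith [hx]
    have hxpos : 0 < x - rp := by linarith
    have hM0' : M0 = rp + 2 * a * rp ^ 3 := by rw [hM0]; ring
    have hg : 0 < a * (x ^ 3 + x ^ 2 * rp + x * rp ^ 2 + rp ^ 3) + (x + rp) - 2 * M := by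
      nlinarith [mul_pos ha (mul_pos (mul_pos hxpos hrp) hrp),
        mul_pos ha (mul_pos (mul_pos hxpos hxpos) hxpos),
        mul_pos ha (mul_pos (mul_pos hxpos hxpos) hrp)]
    nlinarith [mul_pos hxpos hg]
end

section
/- Fix r₊ > 0, Λ < 0, and let ℓ² := 1/(-Λ/3). For any C¹ function φ on [r₊, ∞) with r^{3/2+ε} φ and r^{5/2+ε} φ' bounded for some ε > 0 (so that all integrals converge and boundary terms vanish), the Hardy inequality ∫_{r₊}^∞ φ² r² dr ≤ (4/9) ∫_{r₊}^∞ (φ')² (r - r₊)² (r + r₊ + r₊²/r)² dr holds. -/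
open MeasureTheory Set Real

private lemma hardy_aux_integrable (rp ε K : ℝ) (hrp : 0 < rp) (hε : 0 < ε)
    (f : ℝ → ℝ) (hf : ContinuousOn f (Set.Ioi rp))
    (hb : ∀ r ∈ Set.Ioi rp, |f r| ≤ K * r ^ (-(1 + 2 * ε))) :
    IntegrableOn f (Set.Ioi rp) := by
  have hg : IntegrableOn (fun r : ℝ => K * r ^ (-(1 + 2 * ε))) (Set.Ioi rp) :=
    (((integrableOn_Ioi_rpow_iff hrp).2 (by linarith)).const_mul K)
  refine hg.mono' (hf.aestronglyMeasurable measurableSet_Ioi) ?_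
  filter_upwards [ae_restrict_mem measurableSet_Ioi] with r hr
  simpa [Real.norm_eq_abs] using hb r hr

private lemma hardy_aux_rpow_bound (r a C x : ℝ) (hr0 : 0 < r) (hpa : 0 < r ^ a)
    (h : r ^ a * |x| ≤ C) : |x| ≤ C * r ^ (-a) := by
  rw [Real.rpow_neg hr0.le, ← div_eq_mul_inv, le_div_iff₀ hpa, mul_comm]
  exact h

/-- Weighted Hardy inequality on `[r₊, ∞)`: for `C¹` functions `φ` with
`r^{3/2+ε} φ` and `r^{5/2+ε} φ'` bounded,
`∫_{r₊}^∞ φ² r² dr ≤ (4/9) ∫_{r₊}^∞ (φ')² (r - r₊)² (r + r₊ + r₊²/r)² dr`. -/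
theorem hardy_inequality_halfline (rp Λ : ℝ) (hrp : 0 < rp) (hΛ : Λ < 0)
    (φ : ℝ → ℝ) (hφ : ContDiffOn ℝ 1 φ (Set.Ici rp))
    (ε C : ℝ) (hε : 0 < ε)
    (hb1 : ∀ r ≥ rp, |r ^ ((3 : ℝ) / 2 + ε) * φ r| ≤ C)
    (hb2 : ∀ r ≥ rp, |r ^ ((5 : ℝ) / 2 + ε) * deriv φ r| ≤ C) :
    (∫ r in Set.Ioi rp, (φ r) ^ 2 * r ^ 2)
      ≤ (4 / 9) * ∫ r in Set.Ioi rp,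
          (deriv φ r) ^ 2 * (r - rp) ^ 2 * (r + rp + rp ^ 2 / r) ^ 2 := by
  have hC : 0 ≤ C := le_trans (abs_nonneg _) (hb1 rp le_rfl)
  -- pointwise decay bounds
  have hφb : ∀ r ≥ rp, |φ r| ≤ C * r ^ (-((3:ℝ)/2 + ε)) := by
    intro r hr
    have hr0 : 0 < r := lt_of_lt_of_le hrp hr
    have hp : 0 < r ^ ((3:ℝ)/2 + ε) := Real.rpow_pos_of_pos hr0 _
    have h := hb1 r hr
    rw [abs_mul, abs_of_pos hp] at h
    exact hardy_aux_rpow_bound r _ C _ hr0 hp h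
  have hdb : ∀ r ≥ rp, |deriv φ r| ≤ C * r ^ (-((5:ℝ)/2 + ε)) := by
    intro r hr
    have hr0 : 0 < r := lt_of_lt_of_le hrp hr
    have hp : 0 < r ^ ((5:ℝ)/2 + ε) := Real.rpow_pos_of_pos hr0 _
    have h := hb2 r hr
    rw [abs_mul, abs_of_pos hp] at h
    exact hardy_aux_rpow_bound r _ C _ hr0 hp h
  -- continuity facts
  have hφc : ContinuousOn φ (Set.Ici rp) := hφ.continuousOn
  have hdc : ContinuousOn (deriv φ) (Set.Ioi rp) := by
    have h1 : ContinuousOn (derivWithin φ (Set.Ici rp)) (Set.Ici rp) :=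
      hφ.continuousOn_derivWithin (uniqueDiffOn_Ici rp) le_rfl
    refine ((h1.mono Ioi_subset_Ici_self).congr ?_)
    intro x hx
    exact (derivWithin_of_mem_nhds (Ici_mem_nhds hx)).symm
  have hder : ∀ x ∈ Set.Ioi rp, HasDerivAt φ (deriv φ x) x := by
    intro x hx
    have hx' : rp < x := hx
    exact ((hφ.differentiableOn one_ne_zero x (le_of_lt hx')).differentiableAt
      (Ici_mem_nhds hx')).hasDerivAt
  -- abbreviations
  set A : ℝ → ℝ := fun r => (φ r) ^ 2 * r ^ 2 with hA
  set B : ℝ → ℝ := fun r => 2 * φ r * deriv φ r * ((r ^ 3 - rp ^ 3) / 3) with hB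
  set D : ℝ → ℝ := fun r => (deriv φ r) ^ 2 * (r - rp) ^ 2 * (r + rp + rp ^ 2 / r) ^ 2 with hD
  -- integrability of A
  have intA : IntegrableOn A (Set.Ioi rp) := by
    refine hardy_aux_integrable rp ε (C ^ 2) hrp hε A
      (((hφc.mono Ioi_subset_Ici_self).pow 2).mul (continuousOn_pow 2)) ?_
    intro r hr
    have hrlt : rp < r := hr
    have hrr : rp ≤ r := le_of_lt hrlt
    have hr0 : 0 < r := lt_trans hrp hrlt
    have h1 : |φ r| ≤ C * r ^ (-((3:ℝ)/2 + ε)) := hφb r hrr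
    have key : (φ r) ^ 2 * r ^ 2 ≤ C ^ 2 * r ^ (-(1 + 2*ε)) := by
      have step1 : |φ r| ^ 2 ≤ (C * r ^ (-((3:ℝ)/2 + ε))) ^ 2 :=
        pow_le_pow_left₀ (abs_nonneg _) h1 2
      calc (φ r) ^ 2 * r ^ 2 = |φ r| ^ 2 * r ^ 2 := by rw [sq_abs]
        _ ≤ (C * r ^ (-((3:ℝ)/2 + ε))) ^ 2 * r ^ 2 :=
            mul_le_mul_of_nonneg_right step1 (by positivity)
        _ = C ^ 2 * ((r ^ (-((3:ℝ)/2 + ε))) ^ 2 * r ^ (2:ℕ)) := by ring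
        _ = C ^ 2 * r ^ (-(1 + 2*ε)) := by
            rw [← Real.rpow_natCast (r ^ (-((3:ℝ)/2 + ε))) 2, ← Real.rpow_mul hr0.le,
              ← Real.rpow_natCast r 2, ← Real.rpow_add hr0]
            congr 1
            push_cast
            try ring_nf
    have hAnn : 0 ≤ A r := by positivity
    simpa [hA, abs_of_nonneg hAnn] using key
  -- integrability of B
  have intB : IntegrableOn B (Set.Ioi rp) := by
    refine hardy_aux_integrable rp ε (2 * C ^ 2 / 3) hrp hε B
      ((((continuousOn_const.mul (hφc.mono Ioi_subset_Ici_self)).mul hdc).mul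
        (by fun_prop))) ?_
    intro r hr
    have hrlt : rp < r := hr
    have hrr : rp ≤ r := le_of_lt hrlt
    have hr0 : 0 < r := lt_trans hrp hrlt
    have hF0 : 0 ≤ (r ^ 3 - rp ^ 3) / 3 := by
      have : rp ^ 3 ≤ r ^ 3 := by gcongr
      linarith
    have hF1 : (r ^ 3 - rp ^ 3) / 3 ≤ r ^ 3 / 3 := by
      have : 0 < rp ^ 3 := by positivity
      linarith
    have e1 : |φ r| ≤ C * r ^ (-((3:ℝ)/2 + ε)) := hφb r hrr
    have e2 : |deriv φ r| ≤ C * r ^ (-((5:ℝ)/2 + ε)) := hdb r hrr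
    have p1 : (0:ℝ) ≤ C * r ^ (-((3:ℝ)/2 + ε)) :=
      mul_nonneg hC (Real.rpow_pos_of_pos hr0 _).le
    have p2 : (0:ℝ) ≤ C * r ^ (-((5:ℝ)/2 + ε)) :=
      mul_nonneg hC (Real.rpow_pos_of_pos hr0 _).le
    have step : 2 * |φ r| * |deriv φ r| * ((r ^ 3 - rp ^ 3) / 3)
        ≤ 2 * (C * r ^ (-((3:ℝ)/2 + ε))) * (C * r ^ (-((5:ℝ)/2 + ε))) * (r ^ 3 / 3) := by
      have m1 : 2 * |φ r| ≤ 2 * (C * r ^ (-((3:ℝ)/2 + ε))) := by linarith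
      have m2 : 2 * |φ r| * |deriv φ r|
          ≤ 2 * (C * r ^ (-((3:ℝ)/2 + ε))) * (C * r ^ (-((5:ℝ)/2 + ε))) :=
        mul_le_mul m1 e2 (abs_nonneg _) (by positivity)
      exact mul_le_mul m2 hF1 hF0 (by positivity)
    calc |B r| = 2 * |φ r| * |deriv φ r| * ((r ^ 3 - rp ^ 3) / 3) := by
          rw [hB]
          rw [abs_mul, abs_mul, abs_mul, abs_of_nonneg hF0]
          norm_num
      _ ≤ 2 * (C * r ^ (-((3:ℝ)/2 + ε))) * (C * r ^ (-((5:ℝ)/2 + ε))) * (r ^ 3 / 3) := step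
      _ = 2 * C ^ 2 / 3 * (r ^ (-((3:ℝ)/2 + ε)) * r ^ (-((5:ℝ)/2 + ε)) * r ^ (3:ℕ)) := by ring
      _ = 2 * C ^ 2 / 3 * r ^ (-(1 + 2*ε)) := by
          rw [← Real.rpow_natCast r 3, ← Real.rpow_add hr0, ← Real.rpow_add hr0]
          congr 1
          push_cast
          try ring_nf
  -- integrability of D
  have intD : IntegrableOn D (Set.Ioi rp) := by
    refine hardy_aux_integrable rp ε (C ^ 2) hrp hε D ?_ ?_
    · refine ((hdc.pow 2).mul (by fun_prop)).mul ?_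
      refine ContinuousOn.pow ?_ 2
      refine (continuousOn_id.add continuousOn_const).add ?_
      exact continuousOn_const.div continuousOn_id (fun x hx => ne_of_gt (lt_trans hrp hx))
    · intro r hr
      have hrlt : rp < r := hr
      have hrr : rp ≤ r := le_of_lt hrlt
      have hr0 : 0 < r := lt_trans hrp hrlt
      have hprod : (r - rp) * (r + rp + rp ^ 2 / r) = (r ^ 3 - rp ^ 3) / r := by
        field_simp
        ring
      have hnum : (0:ℝ) ≤ r ^ 3 - rp ^ 3 := by
        have : rp ^ 3 ≤ r ^ 3 := by gcongr
        linarith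
      have hpn : 0 ≤ (r ^ 3 - rp ^ 3) / r := div_nonneg hnum hr0.le
      have hple : (r ^ 3 - rp ^ 3) / r ≤ r ^ 2 := by
        rw [div_le_iff₀ hr0]
        have : 0 < rp ^ 3 := by positivity
        nlinarith
      have hsq : (r - rp) ^ 2 * (r + rp + rp ^ 2 / r) ^ 2 ≤ (r ^ 2) ^ 2 := by
        calc (r - rp) ^ 2 * (r + rp + rp ^ 2 / r) ^ 2
            = ((r - rp) * (r + rp + rp ^ 2 / r)) ^ 2 := by ring
          _ = ((r ^ 3 - rp ^ 3) / r) ^ 2 := by rw [hprod]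
          _ ≤ (r ^ 2) ^ 2 := pow_le_pow_left₀ hpn hple 2
      have key : D r ≤ C ^ 2 * r ^ (-(1 + 2*ε)) := by
        have h1 : (deriv φ r) ^ 2 ≤ (C * r ^ (-((5:ℝ)/2 + ε))) ^ 2 := by
          rw [← sq_abs (deriv φ r)]
          exact pow_le_pow_left₀ (abs_nonneg _) (hdb r hrr) 2
        calc D r = (deriv φ r) ^ 2 * ((r - rp) ^ 2 * (r + rp + rp ^ 2 / r) ^ 2) := by
              rw [hD]; ring
          _ ≤ (C * r ^ (-((5:ℝ)/2 + ε))) ^ 2 * (r ^ 2) ^ 2 :=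
              mul_le_mul h1 hsq (by positivity) (by positivity)
          _ = C ^ 2 * ((r ^ (-((5:ℝ)/2 + ε))) ^ 2 * r ^ (4:ℕ)) := by ring
          _ = C ^ 2 * r ^ (-(1 + 2*ε)) := by
              rw [← Real.rpow_natCast (r ^ (-((5:ℝ)/2 + ε))) 2, ← Real.rpow_mul hr0.le,
                ← Real.rpow_natCast r 4, ← Real.rpow_add hr0]
              congr 1
              push_cast
              try ring_nf
      have hDnn : 0 ≤ D r := by positivity
      simpa [abs_of_nonneg hDnn] using key
  -- integration by parts: ∫ (B + A) = 0
  set g : ℝ → ℝ := fun r => (φ r) ^ 2 * ((r ^ 3 - rp ^ 3) / 3) with hg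
  have hgder : ∀ x ∈ Set.Ioi rp, HasDerivAt g (B x + A x) x := by
    intro x hx
    have h1 : HasDerivAt (fun y => (φ y) ^ 2) (2 * φ x * deriv φ x) x := by
      have := (hder x hx).pow 2
      have h1' : HasDerivAt (φ ^ 2) (2 * φ x * deriv φ x) x := by simpa using this
      exact h1'
    have h2 : HasDerivAt (fun y : ℝ => (y ^ 3 - rp ^ 3) / 3) (x ^ 2) x := by
      have := ((hasDerivAt_pow 3 x).sub_const (rp ^ 3)).div_const 3
      refine this.congr_deriv ?_
      push_cast
      try ring_nf
    have h3 := h1.mul h2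
    have heq : B x + A x
        = 2 * φ x * deriv φ x * ((x ^ 3 - rp ^ 3) / 3) + (φ x) ^ 2 * x ^ 2 := by
      rw [hB, hA]
    rw [heq]
    exact h3
  have hgcont : ContinuousWithinAt g (Set.Ici rp) rp := by
    refine ContinuousWithinAt.mul ?_ ?_
    · exact (hφc.continuousWithinAt (mem_Ici.2 le_rfl)).pow 2
    · exact (((continuous_pow 3).sub continuous_const).div_const 3).continuousWithinAt
  have hgtend : Filter.Tendsto g Filter.atTop (nhds 0) := by
    have hbd : ∀ᶠ r in Filter.atTop, ‖g r‖ ≤ C ^ 2 / 3 * r ^ (-(2*ε)) := by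
      filter_upwards [Filter.eventually_ge_atTop rp] with r hr
      have hr0 : 0 < r := lt_of_lt_of_le hrp hr
      have hnum : (0:ℝ) ≤ r ^ 3 - rp ^ 3 := by
        have : rp ^ 3 ≤ r ^ 3 := by gcongr
        linarith
      have hF0 : 0 ≤ (r ^ 3 - rp ^ 3) / 3 := by linarith
      have hF1 : (r ^ 3 - rp ^ 3) / 3 ≤ r ^ 3 / 3 := by
        have : 0 < rp ^ 3 := by positivity
        linarith
      have e1 : |φ r| ≤ C * r ^ (-((3:ℝ)/2 + ε)) := hφb r hr
      have step1 : |φ r| ^ 2 ≤ (C * r ^ (-((3:ℝ)/2 + ε))) ^ 2 :=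
        pow_le_pow_left₀ (abs_nonneg _) e1 2
      have hnorm : ‖g r‖ = |φ r| ^ 2 * ((r ^ 3 - rp ^ 3) / 3) := by
        rw [hg]
        rw [Real.norm_eq_abs, abs_mul, abs_pow, sq_abs, ← sq_abs (φ r), abs_of_nonneg hF0]
      calc ‖g r‖ = |φ r| ^ 2 * ((r ^ 3 - rp ^ 3) / 3) := hnorm
        _ ≤ (C * r ^ (-((3:ℝ)/2 + ε))) ^ 2 * (r ^ 3 / 3) :=
            mul_le_mul step1 hF1 hF0 (by positivity)
        _ = C ^ 2 / 3 * ((r ^ (-((3:ℝ)/2 + ε))) ^ 2 * r ^ (3:ℕ)) := by ring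
        _ = C ^ 2 / 3 * r ^ (-(2*ε)) := by
            rw [← Real.rpow_natCast (r ^ (-((3:ℝ)/2 + ε))) 2, ← Real.rpow_mul hr0.le,
              ← Real.rpow_natCast r 3, ← Real.rpow_add hr0]
            congr 1
            push_cast
            try ring_nf
    have hlim : Filter.Tendsto (fun r : ℝ => C ^ 2 / 3 * r ^ (-(2*ε))) Filter.atTop (nhds 0) := by
      have := (tendsto_rpow_neg_atTop (by linarith : (0:ℝ) < 2*ε)).const_mul (C ^ 2 / 3)
      simpa using this
    exact squeeze_zero_norm' hbd hlim
  have hibp : (∫ x in Set.Ioi rp, (B x + A x)) = 0 - g rp :=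
    integral_Ioi_of_hasDerivAt_of_tendsto hgcont hgder (intB.add intA) hgtend
  have hgrp : g rp = 0 := by simp [hg]
  have hBA : (∫ x in Set.Ioi rp, B x) + (∫ x in Set.Ioi rp, A x) = 0 := by
    rw [← integral_add intB intA]
    rw [hibp, hgrp]
    ring
  -- pointwise estimate: -B ≤ (1/2) A + (2/9) D
  have hpt : ∀ x ∈ Set.Ioi rp, -B x ≤ (1/2) * A x + (2/9) * D x := by
    intro r hr
    have hrlt : rp < r := hr
    have hr0 : 0 < r := lt_trans hrp hrlt
    have hGr : ((r - rp) * (r + rp + rp ^ 2 / r)) * r = r ^ 3 - rp ^ 3 := by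
      field_simp
      ring
    have hBval : B r = 2 * φ r * deriv φ r * ((r ^ 3 - rp ^ 3) / 3) := by rw [hB]
    have hAval : A r = (φ r) ^ 2 * r ^ 2 := by rw [hA]
    have hDG : D r = (deriv φ r) ^ 2 * ((r - rp) * (r + rp + rp ^ 2 / r)) ^ 2 := by
      rw [hD]; ring
    have hsq := sq_nonneg (φ r * r + (2/3) * deriv φ r * ((r - rp) * (r + rp + rp ^ 2 / r)))
    rw [hBval, hAval, hDG, ← hGr]
    nlinarith [hsq]
  -- conclude
  have hmono : (∫ x in Set.Ioi rp, -B x)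
      ≤ ∫ x in Set.Ioi rp, ((1/2) * A x + (2/9) * D x) :=
    setIntegral_mono_on intB.neg ((intA.const_mul _).add (intD.const_mul _))
      measurableSet_Ioi hpt
  rw [integral_neg] at hmono
  rw [integral_add (intA.const_mul _) (intD.const_mul _), integral_const_mul,
    integral_const_mul] at hmono
  have hIA : (∫ x in Set.Ioi rp, A x) = ∫ r in Set.Ioi rp, (φ r) ^ 2 * r ^ 2 := rfl
  have hID : (∫ x in Set.Ioi rp, D x)
      = ∫ r in Set.Ioi rp, (deriv φ r) ^ 2 * (r - rp) ^ 2 * (r + rp + rp ^ 2 / r) ^ 2 := rfl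
  rw [hIA, hID] at hmono
  rw [hIA] at hBA
  linarith [hBA, hmono]
end

section
/- Let u_D and u_N be solutions of the stationary Klein–Gordon ODE (r²Ω² u')' = ((-Λ/3)α - q₀²A²/Ω²) r² u on (r₊, ∞) with asymptotics u_D ~ r^{-3/2-Δ} and u_N ~ r^{-3/2+Δ} as r → ∞, where Δ = √(9/4 + α) and -9/4 < α < 0. Then there exist constants C > 0, N > r₊, ε > 0 such that the Wronskian satisfies |u_D' u_N - u_D u_N'| ≥ C r^{-4} for r > N and |u_D' u_N - u_D u_N'| ≥ C/(r - r₊) for r₊ < r < r₊ + ε. -/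
open Set Filter Topology Real

/-- Wronskian lower bounds for the basis `{u_D, u_N}` of the stationary
Klein–Gordon ODE: `|u_D' u_N - u_D u_N'| ≥ C r^{-4}` near infinity and
`≥ C/(r - r₊)` near the horizon. -/
theorem wronskian_lower_bounds (M e Λ α q0 rp : ℝ) (hΛ : Λ < 0)
    (hα1 : -9 / 4 < α) (hα2 : α < 0)
    (Δ : ℝ) (hΔ : Δ = Real.sqrt (9 / 4 + α))
    (Ω2 A : ℝ → ℝ)
    (hΩ2 : ∀ r : ℝ, Ω2 r = 1 - 2 * M / r + e ^ 2 / r ^ 2 + (-Λ / 3) * r ^ 2)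
    (hrp : 0 < rp) (hroot : Ω2 rp = 0) (hT : 0 < deriv Ω2 rp)
    (hpos : ∀ r > rp, 0 < Ω2 r)
    (hA : ∀ r : ℝ, A r = -e * (1 / rp - 1 / r))
    (uD uN : ℝ → ℝ)
    (huD_sm : ContDiffOn ℝ 2 uD (Set.Ioi rp)) (huN_sm : ContDiffOn ℝ 2 uN (Set.Ioi rp))
    (huD_ode : ∀ r ∈ Set.Ioi rp,
      deriv (fun s => s ^ 2 * Ω2 s * deriv uD s) r
        = ((-Λ / 3) * α - q0 ^ 2 * (A r) ^ 2 / Ω2 r) * r ^ 2 * uD r)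
    (huN_ode : ∀ r ∈ Set.Ioi rp,
      deriv (fun s => s ^ 2 * Ω2 s * deriv uN s) r
        = ((-Λ / 3) * α - q0 ^ 2 * (A r) ^ 2 / Ω2 r) * r ^ 2 * uN r)
    (hDa : Tendsto (fun r : ℝ => r ^ ((3 : ℝ) / 2 + Δ) * uD r) atTop (𝓝 1))
    (hDa' : Tendsto (fun r : ℝ => r ^ ((5 : ℝ) / 2 + Δ) * deriv uD r) atTop
      (𝓝 (-(3 / 2) - Δ)))
    (hNa : Tendsto (fun r : ℝ => r ^ ((3 : ℝ) / 2 - Δ) * uN r) atTop (𝓝 1))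
    (hNa' : Tendsto (fun r : ℝ => r ^ ((5 : ℝ) / 2 - Δ) * deriv uN r) atTop
      (𝓝 (-(3 / 2) + Δ))) :
    ∃ C > 0, ∃ N > rp, ∃ ε > 0,
      (∀ r > N, C / r ^ 4 ≤ |deriv uD r * uN r - uD r * deriv uN r|) ∧
      (∀ r ∈ Set.Ioo rp (rp + ε),
        C / (r - rp) ≤ |deriv uD r * uN r - uD r * deriv uN r|) := by
  have hΔpos : 0 < Δ := hΔ ▸ Real.sqrt_pos.mpr (by linarith)
  have hLpos : (0:ℝ) < -Λ / 3 := by linarith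
  -- differentiability of Ω2 away from 0
  have hΩfun : Ω2 = fun r => 1 - 2 * M / r + e ^ 2 / r ^ 2 + (-Λ / 3) * r ^ 2 := funext hΩ2
  have hΩdiff : ∀ x : ℝ, x ≠ 0 → DifferentiableAt ℝ Ω2 x := by
    intro x hx
    rw [hΩfun]
    have hd1 : DifferentiableAt ℝ (fun r : ℝ => 2 * M / r) x :=
      (differentiableAt_const (2 * M)).div differentiableAt_id hx
    have hd2 : DifferentiableAt ℝ (fun r : ℝ => e ^ 2 / r ^ 2) x :=
      (differentiableAt_const (e ^ 2)).div (differentiableAt_pow 2) (pow_ne_zero 2 hx)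
    have hd3 : DifferentiableAt ℝ (fun r : ℝ => (-Λ / 3) * r ^ 2) x :=
      (differentiableAt_pow 2).const_mul _
    exact (((differentiableAt_const 1).sub hd1).add hd2).add hd3
  -- derivatives of uD, uN are differentiable on the open set
  have hD1 : DifferentiableOn ℝ (deriv uD) (Set.Ioi rp) :=
    (huD_sm.deriv_of_isOpen (m := 1) isOpen_Ioi (by norm_num)).differentiableOn one_ne_zero
  have hN1 : DifferentiableOn ℝ (deriv uN) (Set.Ioi rp) :=
    (huN_sm.deriv_of_isOpen (m := 1) isOpen_Ioi (by norm_num)).differentiableOn one_ne_zero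
  have hD0 : DifferentiableOn ℝ uD (Set.Ioi rp) := huD_sm.differentiableOn (by norm_num)
  have hN0 : DifferentiableOn ℝ uN (Set.Ioi rp) := huN_sm.differentiableOn (by norm_num)
  set f : ℝ → ℝ := fun s =>
    (s ^ 2 * Ω2 s * deriv uD s) * uN s - uD s * (s ^ 2 * Ω2 s * deriv uN s) with hfdef
  -- f has derivative 0 on Ioi rp
  have hfd : ∀ r ∈ Set.Ioi rp, HasDerivAt f 0 r := by
    intro r hr
    have hrne : r ≠ 0 := (hrp.trans hr).ne'
    have hPdiff : DifferentiableAt ℝ (fun s => s ^ 2 * Ω2 s * deriv uD s) r :=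
      ((differentiableAt_pow 2).mul (hΩdiff r hrne)).mul
        (hD1.differentiableAt (isOpen_Ioi.mem_nhds hr))
    have hQdiff : DifferentiableAt ℝ (fun s => s ^ 2 * Ω2 s * deriv uN s) r :=
      ((differentiableAt_pow 2).mul (hΩdiff r hrne)).mul
        (hN1.differentiableAt (isOpen_Ioi.mem_nhds hr))
    have hPd : HasDerivAt (fun s => s ^ 2 * Ω2 s * deriv uD s)
        (((-Λ / 3) * α - q0 ^ 2 * (A r) ^ 2 / Ω2 r) * r ^ 2 * uD r) r := by
      have := hPdiff.hasDerivAt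
      rwa [huD_ode r hr] at this
    have hQd : HasDerivAt (fun s => s ^ 2 * Ω2 s * deriv uN s)
        (((-Λ / 3) * α - q0 ^ 2 * (A r) ^ 2 / Ω2 r) * r ^ 2 * uN r) r := by
      have := hQdiff.hasDerivAt
      rwa [huN_ode r hr] at this
    have hDd : HasDerivAt uD (deriv uD r) r :=
      (hD0.differentiableAt (isOpen_Ioi.mem_nhds hr)).hasDerivAt
    have hNd : HasDerivAt uN (deriv uN r) r :=
      (hN0.differentiableAt (isOpen_Ioi.mem_nhds hr)).hasDerivAt
    have h3 := (hPd.mul hNd).sub (hDd.mul hQd)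
    replace h3 : HasDerivAt f _ r := h3
    convert h3 using 1
    ring
  -- f is constant on Ioi rp
  have hconst : ∀ x ∈ Set.Ioi rp, ∀ y ∈ Set.Ioi rp, f x = f y := by
    intro x hx y hy
    refine Convex.is_const_of_fderivWithin_eq_zero (convex_Ioi rp)
      (fun z hz => ((hfd z hz).differentiableAt).differentiableWithinAt) ?_ hx hy
    intro z hz
    rw [fderivWithin_of_isOpen isOpen_Ioi hz, (hfd z hz).hasFDerivAt.fderiv]
    ext
    simp
  -- limit of Ω2 r / r^2 at infinity
  have hpow : ∀ n : ℕ, n ≠ 0 → Tendsto (fun r : ℝ => 1 / r ^ n) atTop (𝓝 0) := by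
    intro n hn
    have h := tendsto_inv_atTop_zero.comp (tendsto_pow_atTop (α := ℝ) hn)
    simpa [one_div, Function.comp_def] using h
  have hΩlim : Tendsto (fun r => Ω2 r / r ^ 2) atTop (𝓝 (-Λ / 3)) := by
    have hbr : Tendsto (fun r : ℝ => (-Λ / 3) + (1 / r ^ 2 - 2 * M * (1 / r ^ 3)
        + e ^ 2 * (1 / r ^ 4))) atTop (𝓝 ((-Λ / 3) + (0 - 2 * M * 0 + e ^ 2 * 0))) :=
      tendsto_const_nhds.add (((hpow 2 (by norm_num)).sub
        ((hpow 3 (by norm_num)).const_mul (2 * M))).add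
        ((hpow 4 (by norm_num)).const_mul (e ^ 2)))
    have h0 : ((-Λ / 3) + ((0:ℝ) - 2 * M * 0 + e ^ 2 * 0)) = -Λ / 3 := by ring
    rw [h0] at hbr
    refine hbr.congr' ?_
    filter_upwards [eventually_gt_atTop (0:ℝ)] with r hr
    rw [hΩ2 r]
    field_simp
    ring
  -- limit of r^4 * W at infinity
  have key : ∀ r : ℝ, 0 < r → r ^ (4:ℕ) * (deriv uD r * uN r - uD r * deriv uN r) =
      (r ^ ((5:ℝ)/2 + Δ) * deriv uD r) * (r ^ ((3:ℝ)/2 - Δ) * uN r)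
        - (r ^ ((3:ℝ)/2 + Δ) * uD r) * (r ^ ((5:ℝ)/2 - Δ) * deriv uN r) := by
    intro r hr
    have h1 : r ^ ((5:ℝ)/2 + Δ) * r ^ ((3:ℝ)/2 - Δ) = r ^ (4:ℕ) := by
      rw [← Real.rpow_natCast r 4, ← Real.rpow_add hr]
      norm_num
    have h2 : r ^ ((3:ℝ)/2 + Δ) * r ^ ((5:ℝ)/2 - Δ) = r ^ (4:ℕ) := by
      rw [← Real.rpow_natCast r 4, ← Real.rpow_add hr]
      norm_num
    calc r ^ (4:ℕ) * (deriv uD r * uN r - uD r * deriv uN r)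
        = (r ^ ((5:ℝ)/2 + Δ) * r ^ ((3:ℝ)/2 - Δ)) * (deriv uD r * uN r)
          - (r ^ ((3:ℝ)/2 + Δ) * r ^ ((5:ℝ)/2 - Δ)) * (uD r * deriv uN r) := by
          rw [h1, h2]; ring
      _ = _ := by ring
  have hW4 : Tendsto (fun r : ℝ => r ^ (4:ℕ) * (deriv uD r * uN r - uD r * deriv uN r))
      atTop (𝓝 (-(2 * Δ))) := by
    have h3 := (hDa'.mul hNa).sub (hDa.mul hNa')
    have he : ((-(3/2) - Δ) * 1 - 1 * (-(3/2) + Δ)) = -(2 * Δ) := by ring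
    rw [he] at h3
    refine h3.congr' ?_
    filter_upwards [eventually_gt_atTop (0:ℝ)] with r hr
    exact (key r hr).symm
  -- limit of f at infinity
  have hflim : Tendsto f atTop (𝓝 ((-Λ / 3) * (-(2 * Δ)))) := by
    refine (hΩlim.mul hW4).congr' ?_
    filter_upwards [eventually_gt_atTop (0:ℝ)] with r hr
    have hrne : r ≠ 0 := hr.ne'
    simp only [hfdef]
    field_simp
  -- hence f is identically the limit value
  have hc0 : f (rp + 1) = (-Λ / 3) * (-(2 * Δ)) := by
    have hev : (fun _ : ℝ => f (rp + 1)) =ᶠ[atTop] f := by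
      filter_upwards [eventually_gt_atTop rp] with r hr
      exact hconst (rp + 1) (by simp only [Set.mem_Ioi]; linarith) r hr
    exact tendsto_nhds_unique (tendsto_const_nhds.congr' hev) hflim
  have hcr : ∀ r ∈ Set.Ioi rp, f r = (-Λ / 3) * (-(2 * Δ)) := fun r hr =>
    (hconst r hr (rp + 1) (by simp only [Set.mem_Ioi]; linarith)).trans hc0
  -- absolute value of the Wronskian
  have hKpos : 0 < 2 * Δ * (-Λ / 3) := by positivity
  have hWabs : ∀ r ∈ Set.Ioi rp, |deriv uD r * uN r - uD r * deriv uN r|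
      = (2 * Δ * (-Λ / 3)) / (r ^ 2 * Ω2 r) := by
    intro r hr
    have hden : 0 < r ^ 2 * Ω2 r := mul_pos (pow_pos (hrp.trans hr) 2) (hpos r hr)
    have hfr := hcr r hr
    have hWv : deriv uD r * uN r - uD r * deriv uN r
        = -(2 * Δ * (-Λ / 3)) / (r ^ 2 * Ω2 r) := by
      rw [eq_div_iff hden.ne']
      simp only [hfdef] at hfr
      linear_combination hfr
    rw [hWv, abs_div, abs_neg, abs_of_pos hKpos, abs_of_pos hden]
  -- bound near infinity
  obtain ⟨N0, hN0⟩ := eventually_atTop.mp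
    (hΩlim.eventually_lt_const (show -Λ / 3 < 2 * (-Λ / 3) by linarith))
  -- bound near horizon
  have hslope : Tendsto (slope Ω2 rp) (𝓝[>] rp) (𝓝 (deriv Ω2 rp)) :=
    (hasDerivAt_iff_tendsto_slope.mp (hΩdiff rp hrp.ne').hasDerivAt).mono_left
      (nhdsWithin_mono rp (fun x hx => ne_of_gt hx))
  obtain ⟨b, hb, hbev⟩ := ((nhdsGT_basis rp).eventually_iff).mp
    (hslope.eventually_lt_const (show deriv Ω2 rp < 2 * deriv Ω2 rp by linarith))
  -- choose the constants
  set C1 : ℝ := (2 * Δ * (-Λ / 3)) / (2 * (-Λ / 3)) with hC1def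
  set C2 : ℝ := (2 * Δ * (-Λ / 3)) / (8 * rp ^ 2 * deriv Ω2 rp) with hC2def
  have hC1pos : 0 < C1 := div_pos hKpos (by linarith)
  have hC2pos : 0 < C2 := div_pos hKpos (by positivity)
  refine ⟨min C1 C2, lt_min hC1pos hC2pos, max N0 (rp + 1), by
      have := le_max_right N0 (rp + 1); linarith, min (b - rp) rp,
      lt_min (by linarith) hrp, ?_, ?_⟩
  · -- near infinity
    intro r hr
    have hrrp : rp < r := by
      have := le_max_right N0 (rp + 1); linarith
    have hr0 : 0 < r := hrp.trans hrrp
    have hr4 : (0:ℝ) < r ^ 4 := by positivity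
    have hΩb : Ω2 r ≤ 2 * (-Λ / 3) * r ^ 2 := by
      have h := hN0 r (le_of_lt (lt_of_le_of_lt (le_max_left N0 (rp + 1)) hr))
      have h2 : (0:ℝ) < r ^ 2 := by positivity
      rw [div_lt_iff₀ h2] at h
      linarith
    have hden : 0 < r ^ 2 * Ω2 r := mul_pos (by positivity) (hpos r hrrp)
    rw [hWabs r hrrp]
    calc min C1 C2 / r ^ 4 ≤ C1 / r ^ 4 := by gcongr; exact min_le_left _ _
      _ = (2 * Δ * (-Λ / 3)) / (2 * (-Λ / 3) * r ^ 4) := by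
          rw [hC1def, div_div]
      _ ≤ (2 * Δ * (-Λ / 3)) / (r ^ 2 * Ω2 r) := by
          rw [div_le_div_iff_of_pos_left hKpos (by positivity) hden]
          calc r ^ 2 * Ω2 r ≤ r ^ 2 * (2 * (-Λ / 3) * r ^ 2) := by
                have : (0:ℝ) ≤ r ^ 2 := by positivity
                exact mul_le_mul_of_nonneg_left hΩb this
            _ = 2 * (-Λ / 3) * r ^ 4 := by ring
  · -- near horizon
    intro r hr
    obtain ⟨hr1, hr2⟩ := hr
    have hrrp : rp < r := hr1
    have hr0 : 0 < r := hrp.trans hr1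
    have hrb : r < b := by
      have := min_le_left (b - rp) rp; linarith
    have hr2rp : r < 2 * rp := by
      have := min_le_right (b - rp) rp; linarith
    have hrsub : 0 < r - rp := by linarith
    have hslope_r := hbev ⟨hr1, hrb⟩
    rw [slope_def_field, hroot, sub_zero] at hslope_r
    have hΩb : Ω2 r ≤ 2 * deriv Ω2 rp * (r - rp) := by
      rw [div_lt_iff₀ hrsub] at hslope_r
      linarith
    have hr2b : r ^ 2 ≤ 4 * rp ^ 2 := by nlinarith
    have hden : 0 < r ^ 2 * Ω2 r := mul_pos (by positivity) (hpos r hrrp)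
    rw [hWabs r hrrp]
    calc min C1 C2 / (r - rp) ≤ C2 / (r - rp) := by gcongr; exact min_le_right _ _
      _ = (2 * Δ * (-Λ / 3)) / (8 * rp ^ 2 * deriv Ω2 rp * (r - rp)) := by
          rw [hC2def, div_div]
      _ ≤ (2 * Δ * (-Λ / 3)) / (r ^ 2 * Ω2 r) := by
          rw [div_le_div_iff_of_pos_left hKpos (by positivity) hden]
          calc r ^ 2 * Ω2 r ≤ (4 * rp ^ 2) * (2 * deriv Ω2 rp * (r - rp)) := by
                apply mul_le_mul hr2b hΩb (hpos r hrrp).le (by positivity)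
            _ = 8 * rp ^ 2 * deriv Ω2 rp * (r - rp) := by ring
end
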